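/- One-step recursive feasibility (induction step in the proof of Theorem 1): let a stored edge trajectory of length T be given, and let the baseline capacity c_{t0} satisfy 0 ≤ c_{t0} ≤ C − c̃_T. Suppose ((c_k, χ_k)_{k=0}^N, (u_k)_{k=0}^{N−1}) is a feasible N-step plan from (c_0, χ_0) with baseline c_{t0} whose terminal witness s* satisfies s* < T. Then the state sequence ((c_1, χ_1), …, (c_N, χ_N), (c_N + g_c(χ̃_{s*}, ũ_{s*}), g_χ(χ̃_{s*}, ũ_{s*}))) together with the input sequence (u_1, …, u_{N−1}, ũ_{s*}) is a feasible N-step plan from (c_1, χ_1) with baseline c_{t0}, with terminal witness s* + 1. -/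

import Mathlib

/-
The shifted plan reuses the old plan for its first `N - 1` steps and then follows the stored edge
from index `s` to `s + 1`, so the new terminal state is again on the stored trajectory. The only
non-routine constraint is the capacity limit at the new terminal state:
`c_N + g_c ≤ c̃_{s+1} + c_{t0} ≤ c̃_T + c_{t0} ≤ C`, where the middle step holds because stored
capacities are nondecreasing, their increments being nonnegative.
-/

/-- A 'stored edge trajectory' of length `T`: inputs `ut 0, …, ut (T-1) ∈ U`
together with the trajectory `(ct, χt)` from `(0, χt 0)` under these inputs,
such that `χt t ∈ X` for all `t ∈ [0, T]` and `ct T ≤ C`. -/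
def StoredEdge {L p m : ℕ}
    (gc : (Fin p → ℝ) → (Fin m → ℝ) → (Fin L → ℝ))
    (gχ : (Fin p → ℝ) → (Fin m → ℝ) → (Fin p → ℝ))
    (X : Set (Fin p → ℝ)) (U : Set (Fin m → ℝ)) (C : Fin L → ℝ)
    (T : ℕ) (ut : ℕ → Fin m → ℝ)
    (ct : ℕ → Fin L → ℝ) (χt : ℕ → Fin p → ℝ) : Prop :=
  (∀ t, t < T → ut t ∈ U) ∧
  ct 0 = 0 ∧
  (∀ t, t < T → ct (t + 1) = ct t + gc (χt t) (ut t)) ∧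
  (∀ t, t < T → χt (t + 1) = gχ (χt t) (ut t)) ∧
  (∀ t, t ≤ T → χt t ∈ X) ∧
  ct T ≤ C

/-- A 'feasible N-step plan' from the state `(c0, χ0)` with baseline capacity
`ct0`, relative to a stored edge trajectory `(ct, χt)` of length `T`, with
terminal witness `s`: a state sequence `(cs, χs)` starting at `(c0, χ0)` and an
input sequence `us` with values in `U`, evolving under the separable capacity
dynamics, such that `χs k ∈ X` and `0 ≤ cs k ≤ C` for all `k ∈ [0, N]`, and the
terminal witness `s ∈ [0, T]` satisfies `χs N = χt s` and `cs N - ct0 ≤ ct s`. -/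
def FeasiblePlanWith {L p m : ℕ}
    (gc : (Fin p → ℝ) → (Fin m → ℝ) → (Fin L → ℝ))
    (gχ : (Fin p → ℝ) → (Fin m → ℝ) → (Fin p → ℝ))
    (X : Set (Fin p → ℝ)) (U : Set (Fin m → ℝ)) (C : Fin L → ℝ)
    (T : ℕ) (ct : ℕ → Fin L → ℝ) (χt : ℕ → Fin p → ℝ)
    (N : ℕ) (ct0 : Fin L → ℝ)
    (c0 : Fin L → ℝ) (χ0 : Fin p → ℝ)
    (cs : ℕ → Fin L → ℝ) (χs : ℕ → Fin p → ℝ) (us : ℕ → Fin m → ℝ)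
    (s : ℕ) : Prop :=
  cs 0 = c0 ∧ χs 0 = χ0 ∧
  (∀ k, k < N → us k ∈ U) ∧
  (∀ k, k < N → cs (k + 1) = cs k + gc (χs k) (us k)) ∧
  (∀ k, k < N → χs (k + 1) = gχ (χs k) (us k)) ∧
  (∀ k, k ≤ N → χs k ∈ X) ∧
  (∀ k, k ≤ N → 0 ≤ cs k ∧ cs k ≤ C) ∧
  s ≤ T ∧ χs N = χt s ∧ cs N - ct0 ≤ ct s

section

variable {L p m : ℕ} {gc : (Fin p → ℝ) → (Fin m → ℝ) → (Fin L → ℝ)}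
  {gχ : (Fin p → ℝ) → (Fin m → ℝ) → (Fin p → ℝ)} {X : Set (Fin p → ℝ)} {U : Set (Fin m → ℝ)}
  {C : Fin L → ℝ} {T : ℕ} {ut : ℕ → Fin m → ℝ} {ct : ℕ → Fin L → ℝ} {χt : ℕ → Fin p → ℝ}

theorem StoredEdge.monotoneOn_capacity (hgc : ∀ χ u, 0 ≤ gc χ u)
    (h : StoredEdge gc gχ X U C T ut ct χt) : MonotoneOn ct (Set.Iic T) :=
  monotoneOn_of_le_succ Set.ordConnected_Iic fun t _ _ ht ↦ by
    rw [Order.succ_eq_add_one] at ht ⊢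
    rw [h.2.2.1 t ht]
    exact le_add_of_nonneg_right (hgc _ _)

theorem StoredEdge.capacity_add_le (hgc : ∀ χ u, 0 ≤ gc χ u)
    (h : StoredEdge gc gχ X U C T ut ct χt) {ct0 : Fin L → ℝ} (hct0 : ct0 ≤ C - ct T) {t : ℕ}
    (ht : t ≤ T) : ct t + ct0 ≤ C :=
  calc ct t + ct0 ≤ ct T + (C - ct T) :=
        add_le_add (h.monotoneOn_capacity hgc ht Set.self_mem_Iic ht) hct0
    _ = C := add_sub_cancel _ _

end

theorem one_step_recursive_feasibility_general
    (L p m : ℕ)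
    (gc : (Fin p → ℝ) → (Fin m → ℝ) → (Fin L → ℝ))
    (gχ : (Fin p → ℝ) → (Fin m → ℝ) → (Fin p → ℝ))
    (hgc : ∀ χ u, 0 ≤ gc χ u)
    (X : Set (Fin p → ℝ)) (U : Set (Fin m → ℝ)) (C : Fin L → ℝ)
    (T : ℕ) (ut : ℕ → Fin m → ℝ) (ct : ℕ → Fin L → ℝ) (χt : ℕ → Fin p → ℝ)
    (hstored : StoredEdge gc gχ X U C T ut ct χt)
    (N : ℕ) (hN : 1 ≤ N)
    (ct0 : Fin L → ℝ) (h1 : ct0 ≤ C - ct T)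
    (cs : ℕ → Fin L → ℝ) (χs : ℕ → Fin p → ℝ) (us : ℕ → Fin m → ℝ) (s : ℕ)
    (hplan : FeasiblePlanWith gc gχ X U C T ct χt N ct0 (cs 0) (χs 0) cs χs us s)
    (hs : s < T) :
    FeasiblePlanWith gc gχ X U C T ct χt N ct0 (cs 1) (χs 1)
      (fun k => if k < N then cs (k + 1) else cs N + gc (χt s) (ut s))
      (fun k => if k < N then χs (k + 1) else gχ (χt s) (ut s))
      (fun k => if k + 1 < N then us (k + 1) else ut s)
      (s + 1) := by
  have hcap : ct (s + 1) + ct0 ≤ C := hstored.capacity_add_le hgc h1 hs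
  obtain ⟨hUt, -, hctd, hχtd, hXt, -⟩ := hstored
  obtain ⟨-, -, husU, hcsd, hχsd, hXs, hcb, -, hχN, hcN⟩ := hplan
  have hterm : cs N + gc (χt s) (ut s) - ct0 ≤ ct (s + 1) := by
    rw [hctd s hs, add_sub_right_comm]
    exact add_le_add_left hcN _
  refine ⟨if_pos hN, if_pos hN, fun k _ ↦ ?_, fun k hk ↦ ?_, fun k hk ↦ ?_, fun k hk ↦ ?_,
    fun k hk ↦ ?_, hs, ?_, ?_⟩
  · dsimp only
    split_ifs with h
    exacts [husU _ h, hUt s hs]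
  · obtain rfl | h := (Nat.succ_le_of_lt hk).eq_or_lt
    · simp [hχN]
    · simp [hk, h, hcsd _ h]
  · obtain rfl | h := (Nat.succ_le_of_lt hk).eq_or_lt
    · simp [hχN]
    · simp [hk, h, hχsd _ h]
  · dsimp only
    split_ifs with h
    · exact hXs _ h
    · exact hχtd s hs ▸ hXt _ hs
  · dsimp only
    split_ifs with h
    · exact hcb _ h
    · exact ⟨add_nonneg (hcb N le_rfl).1 (hgc _ _),
        (sub_le_iff_le_add.mp hterm).trans hcap⟩
  · simpa using (hχtd s hs).symm
  · simpa using hterm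

/-- One-step recursive feasibility: if
`((cs k, χs k))_{k=0}^N, (us k)_{k=0}^{N-1}` is a feasible `N`-step plan from
`(cs 0, χs 0)` with baseline `ct0` and terminal witness `s < T`, then the
shifted-and-appended state sequence
`((cs 1, χs 1), …, (cs N, χs N), (cs N + g_c(χt s, ut s), g_χ(χt s, ut s)))`
with input sequence `(us 1, …, us (N-1), ut s)` is a feasible `N`-step plan
from `(cs 1, χs 1)` with baseline `ct0` and terminal witness `s + 1`. -/
theorem one_step_recursive_feasibility
    (L p m : ℕ)
    (gc : (Fin p → ℝ) → (Fin m → ℝ) → (Fin L → ℝ))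
    (gχ : (Fin p → ℝ) → (Fin m → ℝ) → (Fin p → ℝ))
    (hgc : ∀ χ u, 0 ≤ gc χ u)
    (X : Set (Fin p → ℝ)) (U : Set (Fin m → ℝ)) (C : Fin L → ℝ) (hC : 0 ≤ C)
    (T : ℕ) (ut : ℕ → Fin m → ℝ) (ct : ℕ → Fin L → ℝ) (χt : ℕ → Fin p → ℝ)
    (hstored : StoredEdge gc gχ X U C T ut ct χt)
    (N : ℕ) (hN : 1 ≤ N)
    (ct0 : Fin L → ℝ) (h0 : 0 ≤ ct0) (h1 : ct0 ≤ C - ct T)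
    (cs : ℕ → Fin L → ℝ) (χs : ℕ → Fin p → ℝ) (us : ℕ → Fin m → ℝ) (s : ℕ)
    (hplan : FeasiblePlanWith gc gχ X U C T ct χt N ct0 (cs 0) (χs 0) cs χs us s)
    (hs : s < T) :
    FeasiblePlanWith gc gχ X U C T ct χt N ct0 (cs 1) (χs 1)
      (fun k => if k < N then cs (k + 1) else cs N + gc (χt s) (ut s))
      (fun k => if k < N then χs (k + 1) else gχ (χt s) (ut s))
      (fun k => if k + 1 < N then us (k + 1) else ut s)
      (s + 1) :=
  one_step_recursive_feasibility_general L p m gc gχ hgc X U C T ut ct χt hstored N hN ct0 h1 cs χs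
    us s hplan hs
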